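/- arXiv:2101.07840 — 4 statements merged into one kernel-verified Lean document; each statement's English description precedes it below -/
import Mathlib

section
/- Let p be a prime and k a natural number. If a finite multiset of natural numbers, each of which divides p^k, has sum strictly greater than p^k, then it has a sub-multiset whose sum is exactly p^k. -/
/-!
Divisors of `p ^ k` are totally ordered by divisibility, and for a divisibility chain the greedy
choice works: the largest element `d` of `S` divides `n`, every other element divides `d` and hence
`n - d`, so one recurses on `n - d` and `S.erase d`.
-/

theorem Nat.dvd_or_dvd_of_dvd_prime_pow {p k a b : ℕ} (hp : p.Prime) (ha : a ∣ p ^ k)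
    (hb : b ∣ p ^ k) : a ∣ b ∨ b ∣ a := by
  obtain ⟨i, -, rfl⟩ := (Nat.dvd_prime_pow hp).mp ha
  obtain ⟨j, -, rfl⟩ := (Nat.dvd_prime_pow hp).mp hb
  exact (le_total i j).imp (pow_dvd_pow p) (pow_dvd_pow p)

theorem Multiset.exists_le_sum_eq_of_dvd_chain {S : Multiset ℕ}
    (hchain : ∀ a ∈ S, ∀ b ∈ S, a ∣ b ∨ b ∣ a) {n : ℕ} (hdvd : ∀ d ∈ S, d ∣ n)
    (hle : n ≤ S.sum) : ∃ T ≤ S, T.sum = n := by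
  induction S using Multiset.strongInductionOn generalizing n with
  | ih S ih =>
  rcases Nat.eq_zero_or_pos n with rfl | hn
  · exact ⟨0, zero_le S, rfl⟩
  have hS : S ≠ 0 := by
    rintro rfl
    simp only [sum_zero, nonpos_iff_eq_zero] at hle
    omega
  obtain ⟨d, hd, hdmax⟩ : ∃ d ∈ S, ∀ e ∈ S, e ≤ d := exists_max_image id hS
  have hdn : d ≤ n := Nat.le_of_dvd hn (hdvd d hd)
  have hsum : d + (S.erase d).sum = S.sum := sum_erase hd
  have herase : ∀ e ∈ S.erase d, e ∣ n - d := by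
    intro e he
    have heS := mem_of_mem_erase he
    have hed : e ∣ d := by
      rcases hchain e heS d hd with hed | hde
      · exact hed
      · have he0 : 0 < e := Nat.pos_of_dvd_of_pos (hdvd e heS) hn
        rw [le_antisymm (hdmax e heS) (Nat.le_of_dvd he0 hde)]
    exact Nat.dvd_sub (hdvd e heS) hed
  obtain ⟨T, hTS, hT⟩ := ih (S.erase d) (erase_lt.mpr hd)
    (fun a ha b hb => hchain a (mem_of_mem_erase ha) b (mem_of_mem_erase hb)) herase (by omega)
  refine ⟨d ::ₘ T, ?_, by rw [sum_cons, hT]; omega⟩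
  rw [← cons_erase hd]
  exact cons_le_cons d hTS

theorem multiset_sub_sum_eq_prime_pow (p k : ℕ) (hp : p.Prime) (S : Multiset ℕ)
    (hdvd : ∀ d ∈ S, d ∣ p ^ k) (hsum : p ^ k < S.sum) :
    ∃ T ≤ S, T.sum = p ^ k :=
  Multiset.exists_le_sum_eq_of_dvd_chain
    (fun _ ha _ hb => Nat.dvd_or_dvd_of_dvd_prime_pow hp (hdvd _ ha) (hdvd _ hb)) hdvd hsum.le
end

section
/- Let G be a finite group of order p^k (p prime) acting on a finite set s with |s| > p^k. Then there exists a G-invariant subset of s of cardinality exactly p^k. -/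
/-!
Orbits of a `p`-group have `p`-power size, so the orbit sizes are totally ordered by divisibility
and all divide `p ^ k`. Removing a largest orbit from an invariant set leaves an invariant set in
which every orbit size still divides the remaining target, so orbits can be collected greedily
until exactly `p ^ k` points are taken.
-/

open MulAction Finset

namespace Finset

variable {X : Type*}

def IsInvariant (G : Type*) [SMul G X] (t : Finset X) : Prop :=
  ∀ g : G, ∀ x ∈ t, g • x ∈ t

variable {G : Type*} [DecidableEq X] {s t : Finset X}

theorem IsInvariant.union [SMul G X] (hs : s.IsInvariant G) (ht : t.IsInvariant G) :
    (s ∪ t).IsInvariant G := by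
  intro g x hx
  rcases mem_union.mp hx with hx | hx
  · exact mem_union_left _ (hs g x hx)
  · exact mem_union_right _ (ht g x hx)

section Group

variable [Group G] [MulAction G X]

theorem IsInvariant.sdiff (hs : s.IsInvariant G) (ht : t.IsInvariant G) :
    (s \ t).IsInvariant G := by
  intro g x hx
  rw [mem_sdiff] at hx ⊢
  exact ⟨hs g x hx.1, fun hgx => hx.2 (by simpa using ht g⁻¹ _ hgx)⟩

variable [Fintype G]

variable (G) in
def orbitFinset (x : X) : Finset X :=
  univ.image (· • x : G → X)

@[simp]
theorem coe_orbitFinset (x : X) : (orbitFinset G x : Set X) = orbit G x := by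
  simp [orbitFinset, Set.image_univ, orbit]

theorem mem_orbitFinset {x y : X} : y ∈ orbitFinset G x ↔ y ∈ orbit G x := by
  rw [← mem_coe, coe_orbitFinset]

theorem card_orbitFinset (x : X) : #(orbitFinset G x) = Nat.card (orbit G x) := by
  rw [Nat.card_coe_set_eq, ← coe_orbitFinset, Set.ncard_coe_finset]

theorem card_orbitFinset_dvd_card (x : X) : #(orbitFinset G x) ∣ Fintype.card G := by
  rw [card_orbitFinset, Nat.card_coe_set_eq, ← index_stabilizer, ← Nat.card_eq_fintype_card]
  exact Subgroup.index_dvd_card _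

theorem isInvariant_orbitFinset (x : X) : (orbitFinset G x).IsInvariant G := fun g y hy =>
  mem_orbitFinset.mpr (orbit_eq_iff.mpr (mem_orbitFinset.mp hy) ▸ mem_orbit y g)

theorem IsInvariant.orbitFinset_subset (hs : s.IsInvariant G) {x : X} (hx : x ∈ s) :
    orbitFinset G x ⊆ s := by
  intro y hy
  obtain ⟨g, rfl⟩ := mem_orbitFinset.mp hy
  exact hs g x hx

theorem IsInvariant.exists_isInvariant_subset_card_eq {m : ℕ} (hs : s.IsInvariant G)
    (hchain : ∀ x ∈ s, ∀ y ∈ s,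
      #(orbitFinset G x) ≤ #(orbitFinset G y) → #(orbitFinset G x) ∣ #(orbitFinset G y))
    (hdvd : ∀ x ∈ s, #(orbitFinset G x) ∣ m) (hm : m ≤ #s) :
    ∃ t ⊆ s, #t = m ∧ t.IsInvariant G := by
  induction m using Nat.strong_induction_on generalizing s with
  | _ m ih =>
  rcases Nat.eq_zero_or_pos m with rfl | hm_pos
  · exact ⟨∅, empty_subset s, card_empty, fun _ _ h => absurd h (notMem_empty _)⟩
  obtain ⟨x, hx, hx_max⟩ :=
    s.exists_max_image (fun y => #(orbitFinset G y)) (card_pos.mp (hm_pos.trans_le hm))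
  set O := orbitFinset G x
  have hO_sub : O ⊆ s := hs.orbitFinset_subset hx
  have hO_pos : 0 < #O := card_pos.mpr ⟨x, mem_orbitFinset.mpr (mem_orbit_self x)⟩
  have hO_le : #O ≤ m := Nat.le_of_dvd hm_pos (hdvd x hx)
  -- Every other orbit is no larger than `O`, hence divides `#O` and so also `m - #O`.
  obtain ⟨t, ht_sub, ht_card, ht⟩ := ih (m - #O) (Nat.sub_lt hm_pos hO_pos)
    (hs.sdiff (isInvariant_orbitFinset x))
    (fun y hy z hz => hchain y (mem_sdiff.mp hy).1 z (mem_sdiff.mp hz).1)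
    (fun y hy => Nat.dvd_sub (hdvd y (mem_sdiff.mp hy).1)
      (hchain y (mem_sdiff.mp hy).1 x hx (hx_max y (mem_sdiff.mp hy).1)))
    (by rw [card_sdiff_of_subset hO_sub]; omega)
  refine ⟨t ∪ O, union_subset (ht_sub.trans sdiff_subset) hO_sub, ?_,
    ht.union (isInvariant_orbitFinset x)⟩
  rw [card_union_of_disjoint (disjoint_of_subset_left ht_sub sdiff_disjoint), ht_card]
  exact Nat.sub_add_cancel hO_le

end Group

end Finset

theorem IsPGroup.card_orbitFinset_dvd_of_le {p : ℕ} [Fact p.Prime] {G X : Type*} [Group G]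
    [Fintype G] [MulAction G X] [DecidableEq X] (hG : IsPGroup p G) {x y : X}
    (hxy : #(orbitFinset G x) ≤ #(orbitFinset G y)) : #(orbitFinset G x) ∣ #(orbitFinset G y) := by
  have card_eq_pow (z : X) : ∃ n, #(orbitFinset G z) = p ^ n := by
    have := (Finite.finite_mulAction_orbit (M := G) z).to_subtype
    rw [card_orbitFinset]
    exact hG.card_orbit z
  obtain ⟨i, hi⟩ := card_eq_pow x
  obtain ⟨j, hj⟩ := card_eq_pow y
  rw [hi, hj] at hxy ⊢
  exact pow_dvd_pow p ((Nat.pow_le_pow_iff_right (Fact.out : p.Prime).one_lt).mp hxy)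

theorem exists_invariant_subset_card_prime_pow (p k : ℕ) (hp : p.Prime)
    (G : Type*) [Group G] [Fintype G] (hG : Fintype.card G = p ^ k)
    (X : Type*) [MulAction G X] (s : Finset X)
    (hinv : ∀ g : G, ∀ x ∈ s, g • x ∈ s) (hcard : p ^ k < s.card) :
    ∃ t ⊆ s, t.card = p ^ k ∧ ∀ g : G, ∀ x ∈ t, g • x ∈ t := by
  classical
  have := Fact.mk hp
  have hpG : IsPGroup p G := IsPGroup.of_card (by rw [Nat.card_eq_fintype_card, hG])
  exact IsInvariant.exists_isInvariant_subset_card_eq (G := G) hinv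
    (fun _ _ _ _ => hpG.card_orbitFinset_dvd_of_le) (fun x _ => hG ▸ card_orbitFinset_dvd_card x)
    hcard.le
end

section
/- Suppose f selects, for every finite subset z of a type α with |z| > n (where n ≥ 1), an n-element subset f(z) ⊆ z. Then for every k ∈ ℕ there is a choice function h on the (k·n + 1)-element subsets of α, i.e., h assigns to each subset z with |z| = k·n + 1 an element h(z) ∈ z. -/
/-!
A set of size `(m + 1) * n + r` with `r > 0` has more than `n` elements, so `f` selects `n` of them,
and removing these leaves `m * n + r` elements. Starting from `k * n + 1` elements, `k` removals
leave a singleton inside the original set, and its element is chosen.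
-/

namespace Finset

variable {α : Type*} [DecidableEq α]

def removeSelection (f : Finset α → Finset α) (s : Finset α) : Finset α := s \ f s

theorem iterate_removeSelection_subset (f : Finset α → Finset α) (m : ℕ) (s : Finset α) :
    (removeSelection f)^[m] s ⊆ s := by
  induction m generalizing s with
  | zero => exact subset_rfl
  | succ m ih => exact (ih _).trans sdiff_subset

theorem card_iterate_removeSelection {n r : ℕ} (hr : 0 < r) {f : Finset α → Finset α}
    (hf : ∀ z : Finset α, n < z.card → f z ⊆ z ∧ (f z).card = n) (m : ℕ) (s : Finset α)
    (hs : s.card = m * n + r) : ((removeSelection f)^[m] s).card = r := by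
  induction m generalizing s with
  | zero => simpa using hs
  | succ m ih =>
    obtain ⟨hsub, hcard⟩ := hf s (by rw [hs, add_one_mul]; omega)
    refine ih _ ?_
    rw [removeSelection, card_sdiff_of_subset hsub, hcard, hs, add_one_mul]
    omega

end Finset

open Finset in
theorem selector_to_choice_on_kn_add_one_general (α : Type*) [Nonempty α] (n k : ℕ)
    (f : Finset α → Finset α)
    (hf : ∀ z : Finset α, n < z.card → f z ⊆ z ∧ (f z).card = n) :
    ∃ h : Finset α → α, ∀ z : Finset α, z.card = k * n + 1 → h z ∈ z := by
  classical
  refine ⟨fun z => Classical.epsilon (· ∈ (removeSelection f)^[k] z), fun z hz => ?_⟩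
  have hsingle : ((removeSelection f)^[k] z).card = 1 :=
    card_iterate_removeSelection one_pos hf k z hz
  exact iterate_removeSelection_subset f k z
    (Classical.epsilon_spec (card_pos.mp (hsingle ▸ one_pos)))

theorem selector_to_choice_on_kn_add_one (α : Type*) [Nonempty α] (n k : ℕ) (hn : 1 ≤ n)
    (f : Finset α → Finset α)
    (hf : ∀ z : Finset α, n < z.card → f z ⊆ z ∧ (f z).card = n) :
    ∃ h : Finset α → α, ∀ z : Finset α, z.card = k * n + 1 → h z ∈ z :=
  selector_to_choice_on_kn_add_one_general α n k f hf
end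

section
/- Let m ∈ ℕ be positive, let finite sets Y_1, ..., Y_l be disjoint with |Y_j| = m, and let σ be a permutation acting as a disjoint product of m-cycles, one on each Y_j. Let L ⊆ ⋃ Y_j be such that for each j, L ∩ Y_j is a single orbit of ⟨σ^{m/a_j}⟩ of size a_j, where a_j ∣ m and a_j > 0. Then σ^s(L) = L if and only if m / gcd(a_1,...,a_l) divides s. -/
/-!
Each block `Y j` is a single cycle of `σ`, so every power `σ ^ s` preserves it, and `σ ^ s` fixes
`L` iff it fixes every piece `L ∩ Y j`, the orbit of some `x j` under `σ ^ (m / a j)`. Since `x j`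
has period `m`, `σ ^ s` maps `x j` into this orbit iff `s ≡ (m / a j) * t [MOD m]` for some `t`,
i.e. iff `m / a j ∣ s`; conversely a power of `σ ^ (m / a j)` permutes its own finite orbit.
Finally `m / a j ∣ s` for all `j` iff `m ∣ a j * s` for all `j` iff `m ∣ gcd a * s`.
-/

open Set Function

theorem Nat.forall_div_dvd_iff_div_gcd_dvd {ι : Type*} {s : Finset ι} (hs : s.Nonempty)
    {a : ι → ℕ} {m : ℕ} (ha : ∀ i ∈ s, 0 < a i ∧ a i ∣ m) (k : ℕ) :
    (∀ i ∈ s, m / a i ∣ k) ↔ m / s.gcd a ∣ k := by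
  obtain ⟨i₀, hi₀⟩ := hs
  have hgcd_pos : 0 < s.gcd a :=
    Nat.pos_of_ne_zero fun h ↦ (ha i₀ hi₀).1.ne' (Finset.gcd_eq_zero_iff.1 h i₀ hi₀)
  have hgcd_dvd : s.gcd a ∣ m := (Finset.gcd_dvd hi₀).trans (ha i₀ hi₀).2
  calc (∀ i ∈ s, m / a i ∣ k) ↔ ∀ i ∈ s, m ∣ a i * k :=
        forall₂_congr fun i hi ↦ Nat.div_dvd_iff_dvd_mul (ha i hi).2 (ha i hi).1
    _ ↔ m ∣ s.gcd a * k := by rw [← Finset.dvd_gcd_iff, Finset.gcd_mul_right, normalize_eq]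
    _ ↔ m / s.gcd a ∣ k := (Nat.div_dvd_iff_dvd_mul hgcd_dvd hgcd_pos).symm

theorem Set.image_eq_self_iff_forall_image_inter_eq {ι α : Type*} {f : α → α} (hf : Injective f)
    {Y : ι → Set α} (hY : ∀ i, f '' Y i = Y i) {L : Set α} (hL : L ⊆ ⋃ i, Y i) :
    f '' L = L ↔ ∀ i, f '' (L ∩ Y i) = L ∩ Y i := by
  refine ⟨fun h i ↦ by rw [image_inter hf, h, hY], fun h ↦ ?_⟩
  have hL_eq : L = ⋃ i, L ∩ Y i := by rw [← inter_iUnion, inter_eq_left.2 hL]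
  rw [hL_eq, image_iUnion]
  exact iUnion_congr h

namespace Equiv.Perm

variable {α : Type*} {σ : Perm α}

theorem isCycleOn_of_mapsTo {s : Set α} (hs : s.Finite) (hmaps : MapsTo σ s s)
    (hpow : ∀ x ∈ s, ∀ y ∈ s, ∃ t : ℕ, (σ ^ t) x = y) : σ.IsCycleOn s :=
  ⟨(hs.injOn_iff_bijOn_of_mapsTo hmaps).1 σ.injective.injOn, fun x hx y hy ↦
    let ⟨t, ht⟩ := hpow x hx y hy
    ⟨t, by rwa [zpow_natCast]⟩⟩

theorem image_pow_range_pow_apply_eq (τ : Perm α) {x : α}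
    (hfin : (range fun t : ℕ ↦ (τ ^ t) x).Finite) (q : ℕ) :
    (τ ^ q) '' range (fun t : ℕ ↦ (τ ^ t) x) = range fun t : ℕ ↦ (τ ^ t) x := by
  have hmaps : MapsTo (τ ^ q) (range fun t : ℕ ↦ (τ ^ t) x) (range fun t : ℕ ↦ (τ ^ t) x) := by
    rintro _ ⟨t, rfl⟩
    exact ⟨q + t, by simp only [pow_add, mul_apply]⟩
  exact ((hfin.injOn_iff_bijOn_of_mapsTo hmaps).1 (τ ^ q).injective.injOn).image_eq

theorem IsCycleOn.image_pow_range_pow_pow_apply_eq_iff {s : Set α} (hs : s.Finite)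
    (hf : σ.IsCycleOn s) {x : α} (hx : x ∈ s) {d : ℕ} (hd : d ∣ s.ncard) (k : ℕ) :
    (σ ^ k) '' range (fun t : ℕ ↦ ((σ ^ d) ^ t) x) = range (fun t : ℕ ↦ ((σ ^ d) ^ t) x) ↔
      d ∣ k := by
  lift s to Finset α using hs
  rw [ncard_coe_finset] at hd
  constructor
  · intro h
    obtain ⟨t, ht⟩ : (σ ^ k) x ∈ range fun t : ℕ ↦ ((σ ^ d) ^ t) x :=
      h ▸ mem_image_of_mem _ ⟨0, by simp only [pow_zero, one_apply]⟩
    simp only [← pow_mul, hf.pow_apply_eq_pow_apply hx] at ht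
    exact (ht.dvd_iff hd).1 (dvd_mul_right d t)
  · rintro ⟨q, rfl⟩
    rw [pow_mul]
    refine image_pow_range_pow_apply_eq _ (s.finite_toSet.subset ?_) q
    rintro _ ⟨t, rfl⟩
    exact (hf.1.mapsTo.perm_pow d).perm_pow t hx

end Equiv.Perm

theorem pow_stabilizes_union_of_orbits_iff_general (α : Type*) (m l : ℕ) (hl : 0 < l)
    (a : Fin l → ℕ) (ha : ∀ j, 0 < a j ∧ a j ∣ m)
    (Y : Fin l → Set α) (hfin : ∀ j, (Y j).Finite) (hcard : ∀ j, (Y j).ncard = m)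
    (σ : Equiv.Perm α)
    (hinv : ∀ j, ∀ x ∈ Y j, σ x ∈ Y j)
    (htrans : ∀ j, ∀ x ∈ Y j, ∀ y ∈ Y j, ∃ t : ℕ, (σ ^ t) x = y)
    (L : Set α) (hL : L ⊆ ⋃ j, Y j)
    (horb : ∀ j, ∃ x ∈ Y j,
      L ∩ Y j = {y | ∃ t : ℕ, ((σ ^ (m / a j)) ^ t) x = y}) :
    ∀ s : ℕ, ((σ ^ s) '' L = L ↔ (m / Finset.univ.gcd a) ∣ s) := by
  intro s
  choose x hxY hxL using horb
  have hcycle j : σ.IsCycleOn (Y j) := Equiv.Perm.isCycleOn_of_mapsTo (hfin j) (hinv j) (htrans j)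
  have hnonempty : (Finset.univ : Finset (Fin l)).Nonempty := ⟨⟨0, hl⟩, Finset.mem_univ _⟩
  rw [image_eq_self_iff_forall_image_inter_eq (σ ^ s).injective
      (fun j ↦ ((hcycle j).1.perm_pow s).image_eq) hL,
    ← Nat.forall_div_dvd_iff_div_gcd_dvd hnonempty (fun j _ ↦ ha j)]
  refine forall_congr' fun j ↦ ?_
  rw [hxL j, imp_iff_right (Finset.mem_univ j)]
  exact (hcycle j).image_pow_range_pow_pow_apply_eq_iff (hfin j) (hxY j)
    ((hcard j).symm ▸ Nat.div_dvd_of_dvd (ha j).2) s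

theorem pow_stabilizes_union_of_orbits_iff (α : Type*) (m l : ℕ) (hm : 0 < m) (hl : 0 < l)
    (a : Fin l → ℕ) (ha : ∀ j, 0 < a j ∧ a j ∣ m)
    (Y : Fin l → Set α) (hfin : ∀ j, (Y j).Finite) (hcard : ∀ j, (Y j).ncard = m)
    (hdisj : Pairwise (Function.onFun Disjoint Y))
    (σ : Equiv.Perm α)
    (hinv : ∀ j, ∀ x ∈ Y j, σ x ∈ Y j)
    (htrans : ∀ j, ∀ x ∈ Y j, ∀ y ∈ Y j, ∃ t : ℕ, (σ ^ t) x = y)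
    (L : Set α) (hL : L ⊆ ⋃ j, Y j)
    (horb : ∀ j, ∃ x ∈ Y j,
      L ∩ Y j = {y | ∃ t : ℕ, ((σ ^ (m / a j)) ^ t) x = y}) :
    ∀ s : ℕ, ((σ ^ s) '' L = L ↔ (m / Finset.univ.gcd a) ∣ s) :=
  pow_stabilizes_union_of_orbits_iff_general α m l hl a ha Y hfin hcard σ hinv htrans L hL horb
end
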